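/- The condition tr(ρ²) = tr((tr_B ρ)²) · tr((tr_A ρ)²) is not sufficient for uncorrelation: there exists a 4×4 density matrix ρ such that tr(ρ²) = tr((tr_B ρ)²) · tr((tr_A ρ)²) but ρ ≠ (tr_B ρ) ⊗ (tr_A ρ). -/

import Mathlib

open Matrix Kronecker ComplexOrder

/-- Partial trace over the second qubit. -/
noncomputable def trB (ρ : Matrix (Fin 2 × Fin 2) (Fin 2 × Fin 2) ℂ) :
    Matrix (Fin 2) (Fin 2) ℂ :=
  Matrix.of fun a b => ∑ c : Fin 2, ρ (a, c) (b, c)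

/-- Partial trace over the first qubit. -/
noncomputable def trA (ρ : Matrix (Fin 2 × Fin 2) (Fin 2 × Fin 2) ℂ) :
    Matrix (Fin 2) (Fin 2) ℂ :=
  Matrix.of fun c d => ∑ a : Fin 2, ρ (a, c) (a, d)

/-!
A classically correlated state already works. For the diagonal state with weights
`(0, 3, 4, 5) / 12` on `|00⟩, |01⟩, |10⟩, |11⟩` the marginals are `(3, 9) / 12` and `(4, 8) / 12`,
and the purities multiply: `(0² + 3² + 4² + 5²) · 12² = (3² + 9²) · (4² + 8²)`.
Yet the weight of `|00⟩` is `0`, while in the product of the marginals it is `(3 · 4) / 12²`.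
-/

theorem Matrix.trace_diagonal_mul_self {n R : Type*} [Fintype n] [DecidableEq n]
    [CommSemiring R] (d : n → R) :
    (diagonal d * diagonal d).trace = ∑ i, d i ^ 2 := by
  simp [diagonal_mul_diagonal, trace_diagonal, sq]

theorem trB_diagonal (d : Fin 2 × Fin 2 → ℂ) :
    trB (diagonal d) = diagonal fun a => ∑ c, d (a, c) := by
  ext a b
  simp [trB, diagonal_apply]

theorem trA_diagonal (d : Fin 2 × Fin 2 → ℂ) :
    trA (diagonal d) = diagonal fun c => ∑ a, d (a, c) := by
  ext c e
  simp [trA, diagonal_apply]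

noncomputable def correlatedWeights : Fin 2 × Fin 2 → ℂ
  | (0, 0) => 0
  | (0, 1) => 3 / 12
  | (1, 0) => 4 / 12
  | (1, 1) => 5 / 12

theorem correlatedWeights_nonneg : 0 ≤ correlatedWeights := by
  rintro ⟨a, c⟩
  fin_cases a <;> fin_cases c <;> norm_num [correlatedWeights, Complex.le_def]

theorem stmt_12 :
    ∃ ρ : Matrix (Fin 2 × Fin 2) (Fin 2 × Fin 2) ℂ,
      ρ.IsHermitian ∧ ρ.PosSemidef ∧ ρ.trace = 1 ∧
      (ρ * ρ).trace = ((trB ρ) * (trB ρ)).trace * ((trA ρ) * (trA ρ)).trace ∧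
      ρ ≠ (trB ρ) ⊗ₖ (trA ρ) := by
  have hpsd : (diagonal correlatedWeights).PosSemidef :=
    PosSemidef.diagonal correlatedWeights_nonneg
  refine ⟨diagonal correlatedWeights, hpsd.isHermitian, hpsd, ?_, ?_, ?_⟩
  · norm_num [trace_diagonal, Fintype.sum_prod_type, correlatedWeights]
  · simp only [trB_diagonal, trA_diagonal, trace_diagonal_mul_self, Fintype.sum_prod_type,
      Fin.sum_univ_two, correlatedWeights]
    norm_num
  · rw [trB_diagonal, trA_diagonal, diagonal_kronecker_diagonal]
    intro h
    have h00 := congrFun (congrFun h (0, 0)) (0, 0)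
    simp [Fin.sum_univ_two, correlatedWeights] at h00
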